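/- arXiv:1008.2901 — 2 statements merged into one kernel-verified Lean document; each statement's English description precedes it below -/
import Mathlib

section
/- The set {g_1(x_1), ..., g_n(x_n)} is a universal Gröbner basis of the ideal I: for every monomial order ≼ on the monomials of F[x_1,...,x_n] and every nonzero f ∈ I, the ≼-leading monomial of f is divisible by x_i^{d_i} for some index i (equivalently, the i-th exponent of the leading monomial of f is at least d_i). -/
open MvPolynomial

/-- The Taylor coefficient `f_u(s)`: the coefficient of `x^u` in `f(x + s)`. -/
noncomputable def taylorCoeff {F : Type*} [Field F] {n : ℕ}
    (f : MvPolynomial (Fin n) F) (s : Fin n → F) (u : Fin n →₀ ℕ) : F :=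
  coeff u (aeval (fun i => X i + C (s i)) f)

/-- Membership in the ideal `I(s, w)`: all Taylor coefficients `f_u(s)` with
`u < w` (componentwise) vanish. -/
def memPointIdeal {F : Type*} [Field F] {n : ℕ}
    (f : MvPolynomial (Fin n) F) (s : Fin n → F) (w : Fin n → ℕ) : Prop :=
  ∀ u : Fin n →₀ ℕ, (∀ i, u i < w i) → taylorCoeff f s u = 0

/-- The polynomial `g_i(x_i) = ∏_{s ∈ S_i} (x_i - s)^{m_i(s)}`. -/
noncomputable def gPoly {F : Type*} [Field F] {n : ℕ}
    (S : Fin n → Finset F) (m : Fin n → F → ℕ) (i : Fin n) : MvPolynomial (Fin n) F :=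
  ∏ s ∈ S i, (X i - C s) ^ m i s

/-- The size `d_i = Σ_{s ∈ S_i} m_i(s)` of the multiset `(S_i, m_i)`. -/
def dSize {F : Type*} {n : ℕ} (S : Fin n → Finset F) (m : Fin n → F → ℕ) (i : Fin n) : ℕ :=
  ∑ s ∈ S i, m i s

/-!
A polynomial `f ∈ I` whose monomials `x^u` all satisfy `u_i < d_i` vanishes. Indeed, viewing `f`
as a polynomial in `x_1` over the remaining variables, each Taylor coefficient of `f` at `s ∈ S_1`
of order `< m_1(s)` is again such a polynomial, lying in the ideal of the smaller grid, hence zero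
by induction on `n`; so `∏_s (x_1 - s)^{m_1(s)}`, of degree `d_1`, divides `f`, forcing `f = 0`.

Reducing a monomial `x^u` modulo the `g_i`, i.e. replacing each `x_i^{u_i}` by its remainder
modulo `g_i`, only produces monomials dividing `x^u`, hence `≼ x^u` for every monomial order.
So if the leading monomial `x^L` of `f ∈ I` had `L_i < d_i` for all `i`, it would survive the
reduction of `f` with its coefficient, whereas the reduced polynomial lies in `I` and vanishes.
-/

open scoped Polynomial Pointwise

namespace Polynomial

variable {R : Type*} [CommRing R]

theorem X_sub_C_pow_dvd_of_coeff_taylor_eq_zero {p : R[X]} {r : R} {k : ℕ}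
    (h : ∀ j < k, (taylor r p).coeff j = 0) : (X - C r) ^ k ∣ p := by
  rw [← map_dvd_iff (taylorEquiv r)]
  change taylor r _ ∣ taylor r p
  rw [taylor_pow, map_sub, taylor_X, taylor_C, add_sub_cancel_right, X_pow_dvd_iff]
  exact h

theorem eq_zero_of_coeff_taylor_eq_zero_of_degree_lt [IsDomain R] {ι : Type*} {p : R[X]}
    {T : Finset ι} {a : ι → R} {μ : ι → ℕ}
    (ha : ∀ s ∈ T, ∀ t ∈ T, s ≠ t → IsUnit (a s - a t))
    (hp : ∀ t ∈ T, ∀ j < μ t, (taylor (a t) p).coeff j = 0)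
    (hdeg : p.degree < ∑ t ∈ T, μ t) : p = 0 := by
  have hdvd : ∏ t ∈ T, (X - C (a t)) ^ μ t ∣ p :=
    Finset.prod_dvd_of_coprime
      (fun s hs t ht hst => (isCoprime_X_sub_C_of_isUnit_sub (ha s hs t ht hst)).pow)
      fun t ht => X_sub_C_pow_dvd_of_coeff_taylor_eq_zero (hp t ht)
  refine eq_zero_of_dvd_of_degree_lt hdvd (hdeg.trans_le ?_)
  simp [degree_prod, degree_pow]

theorem coeff_taylor_mem_of_forall_coeff_mem {A : Type*} [CommRing A] [Algebra R A]
    {M : Submodule R A} {p : A[X]} (hp : ∀ k, p.coeff k ∈ M) (t : R) (j : ℕ) :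
    (taylor (algebraMap R A t) p).coeff j ∈ M := by
  rw [taylor_coeff, eval_eq_sum_range]
  refine Submodule.sum_mem _ fun k _ => ?_
  rw [hasseDeriv_coeff, ← map_pow, mul_comm, ← Algebra.smul_def, ← nsmul_eq_mul]
  exact M.smul_mem _ (M.nsmul_mem (hp _) _)

theorem lt_natDegree_of_mem_support_modByMonic [Nontrivial R] {p q : R[X]} (hq : q.Monic)
    {k : ℕ} (hk : k ∈ (p %ₘ q).support) : k < q.natDegree := by
  have hlt := (le_degree_of_ne_zero (mem_support_iff.mp hk)).trans_lt (degree_modByMonic_lt p hq)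
  rwa [degree_eq_natDegree hq.ne_zero, Nat.cast_lt] at hlt

end Polynomial

namespace MvPolynomial

section FinSucc

variable {R : Type*} [CommRing R] {n : ℕ}

theorem finSuccEquiv_aeval_X_add_C (s : Fin (n + 1) → R) (f : MvPolynomial (Fin (n + 1)) R) :
    finSuccEquiv R n (aeval (fun i => X i + C (s i)) f) =
      (Polynomial.taylor (C (s 0)) (finSuccEquiv R n f)).map
        (aeval (R := R) fun i : Fin n => X i + C (s i.succ)) := by
  induction f using MvPolynomial.induction_on with
  | C a => simp [Polynomial.taylor_C, finSuccEquiv_apply]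
  | add p q hp hq => simp only [map_add, Polynomial.map_add, hp, hq]
  | mul_X p i hp =>
    rw [map_mul, map_mul, map_mul, Polynomial.taylor_mul, Polynomial.map_mul, hp]
    refine congrArg (HMul.hMul _) ?_
    cases i using Fin.cases with
    | zero => simp [Polynomial.taylor_X, finSuccEquiv_apply]
    | succ j => simp [Polynomial.taylor_C, finSuccEquiv_apply]

theorem coeff_finSuccEquiv_mem_restrictSupport {d : Fin (n + 1) → ℕ}
    {f : MvPolynomial (Fin (n + 1)) R} (hf : f ∈ restrictSupport R {v | ∀ i, v i < d i})
    (k : ℕ) : (finSuccEquiv R n f).coeff k ∈ restrictSupport R {v | ∀ i, v i < d i.succ} := by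
  rw [mem_restrictSupport_iff]
  intro v hv i
  rw [Finset.mem_coe, mem_support_iff, finSuccEquiv_coeff_coeff] at hv
  simpa using hf (mem_support_iff.mpr hv) i.succ

end FinSucc

section Reduction

variable {σ R : Type*} [CommRing R]

theorem aeval_X_mem_restrictSupport (j : σ) (q : R[X]) :
    Polynomial.aeval (X j) q ∈ restrictSupport R (Finsupp.single j '' q.support) := by
  rw [Polynomial.aeval_eq_sum_range]
  refine Submodule.sum_mem _ fun k _ => ?_
  rw [X_pow_eq_monomial, smul_monomial, smul_eq_mul, mul_one, monomial_mem_restrictSupport]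
  by_cases hk : q.coeff k = 0
  · exact Or.inr hk
  · exact Or.inl ⟨k, Polynomial.mem_support_iff.mpr hk, rfl⟩

theorem prod_mem_restrictSupport_sum {ι : Type*} (A : Finset ι) {p : ι → MvPolynomial σ R}
    {s : ι → Set (σ →₀ ℕ)} (h : ∀ j ∈ A, p j ∈ restrictSupport R (s j)) :
    ∏ j ∈ A, p j ∈ restrictSupport R (∑ j ∈ A, s j) := by
  classical
  induction A using Finset.induction_on with
  | empty => simpa using Submodule.one_le.mp (le_refl (1 : Submodule R (MvPolynomial σ R)))
  | insert j A hj ih =>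
    rw [Finset.prod_insert hj, Finset.sum_insert hj, restrictSupport_add]
    exact Submodule.mul_mem_mul (h j (Finset.mem_insert_self j A))
      (ih fun i hi => h i (Finset.mem_insert_of_mem hi))

variable [Nontrivial R] [Fintype σ] {P : σ → R[X]}

theorem exists_monomial_sub_reduced_mem_span (hP : ∀ j, (P j).Monic) (u : σ →₀ ℕ) :
    ∃ ρ, monomial u 1 - ρ ∈ Ideal.span (Set.range fun j => Polynomial.aeval (X j) (P j)) ∧
      ρ ∈ restrictSupport R {v | v ≤ u ∧ ∀ i, v i < (P i).natDegree} ∧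
      ((∀ i, u i < (P i).natDegree) → ρ = monomial u 1) := by
  classical
  have monomial_eq_prod : monomial u (1 : R) = ∏ j, (X j : MvPolynomial σ R) ^ u j := by
    rw [monomial_eq, C_1, one_mul, Finsupp.prod_fintype _ _ fun _ => pow_zero _]
  set q : σ → R[X] := fun j => Polynomial.X ^ u j %ₘ P j
  refine ⟨∏ j, Polynomial.aeval (X j) (q j), ?_, ?_, fun hu => ?_⟩
  · rw [← Ideal.Quotient.eq, monomial_eq_prod, map_prod, map_prod]
    refine Finset.prod_congr rfl fun j _ => Ideal.Quotient.eq.mpr ?_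
    have hdiv := congrArg (Polynomial.aeval (X j : MvPolynomial σ R))
      (Polynomial.modByMonic_add_div (Polynomial.X ^ u j) (P j))
    rw [map_add, map_mul, map_pow, Polynomial.aeval_X] at hdiv
    rw [← hdiv, add_sub_cancel_left]
    exact Ideal.mul_mem_right _ _ (Ideal.subset_span ⟨j, rfl⟩)
  · refine restrictSupport_mono R ?_
      (prod_mem_restrictSupport_sum _ fun j _ => aeval_X_mem_restrictSupport j (q j))
    intro v hv
    obtain ⟨g, hg, rfl⟩ := (Set.mem_fintype_sum _ v).mp hv
    choose k hk hgk using hg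
    obtain rfl : g = fun j => Finsupp.single j (k j) := (_root_.funext hgk).symm
    have hv : ∀ i, (∑ j, Finsupp.single j (k j)) i = k i := fun i => by
      simp [Finsupp.finsetSum_apply, Finsupp.single_apply]
    refine ⟨Finsupp.le_def.mpr fun i => ?_, fun i => ?_⟩ <;> rw [hv i]
    · exact (Polynomial.le_natDegree_of_mem_supp _ (hk i)).trans
        (Polynomial.natDegree_modByMonic_le_left.trans (Polynomial.natDegree_X_pow_le _))
    · exact Polynomial.lt_natDegree_of_mem_support_modByMonic (hP i) (hk i)
  · rw [monomial_eq_prod]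
    refine Finset.prod_congr rfl fun j _ => ?_
    rw [show q j = _ from (Polynomial.modByMonic_eq_self_iff (hP j)).mpr ?_, map_pow,
      Polynomial.aeval_X]
    rw [Polynomial.degree_X_pow, Polynomial.degree_eq_natDegree (hP j).ne_zero]
    exact_mod_cast hu j

theorem exists_sub_reduced_mem_span (hP : ∀ j, (P j).Monic) (f : MvPolynomial σ R) :
    ∃ r, f - r ∈ Ideal.span (Set.range fun j => Polynomial.aeval (X j) (P j)) ∧
      r ∈ restrictSupport R {v | ∀ i, v i < (P i).natDegree} ∧
      ∀ L, (∀ i, L i < (P i).natDegree) → (∀ u ∈ f.support, L ≤ u → u = L) →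
        coeff L r = coeff L f := by
  choose ρ hρJ hρ hρ_reduced using exists_monomial_sub_reduced_mem_span hP
  refine ⟨∑ u ∈ f.support, coeff u f • ρ u, ?_, ?_, fun L hL hmax => ?_⟩
  · have hsum : f - ∑ u ∈ f.support, coeff u f • ρ u =
        ∑ u ∈ f.support, C (coeff u f) * (monomial u 1 - ρ u) := by
      simp_rw [mul_sub, C_mul_monomial, mul_one, ← smul_eq_C_mul, Finset.sum_sub_distrib,
        ← f.as_sum]
    rw [hsum]
    exact Ideal.sum_mem _ fun u _ => Ideal.mul_mem_left _ _ (hρJ u)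
  · exact Submodule.sum_mem _ fun u _ =>
      Submodule.smul_mem _ _ (restrictSupport_mono R (fun v hv => hv.2) (hρ u))
  · simp only [coeff_sum, coeff_smul, smul_eq_mul]
    refine (Finset.sum_eq_single L (fun u hu huL => ?_) fun hL => ?_).trans ?_
    · have hρL : coeff L (ρ u) = 0 :=
        notMem_support_iff.mp fun hLu => huL (hmax u hu (hρ u hLu).1)
      rw [hρL, mul_zero]
    · rw [notMem_support_iff.mp hL, zero_mul]
    · classical rw [hρ_reduced L hL, coeff_monomial, if_pos rfl, mul_one]

end Reduction

end MvPolynomial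

theorem rel_of_le {M : Type*} [AddCommMonoid M] [PartialOrder M] [CanonicallyOrderedAdd M]
    {r : M → M → Prop} (hadd : ∀ a b c, r a b → r (a + c) (b + c)) (hzero : ∀ a, r 0 a)
    {a b : M} (hab : a ≤ b) : r a b := by
  obtain ⟨c, rfl⟩ := exists_add_of_le hab
  simpa [add_comm] using hadd 0 c a (hzero c)

section Grid

variable {F : Type*} [Field F] {n : ℕ}

noncomputable def pointIdeal (s : Fin n → F) (w : Fin n → ℕ) :
    Ideal (MvPolynomial (Fin n) F) :=
  (restrictSupportIdeal (R := F) {u : Fin n →₀ ℕ | ∃ i, w i ≤ u i}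
    fun _ _ huv ⟨i, hi⟩ => ⟨i, hi.trans (huv i)⟩).comap (aeval fun i => X i + C (s i))

theorem mem_pointIdeal {f : MvPolynomial (Fin n) F} {s : Fin n → F} {w : Fin n → ℕ} :
    f ∈ pointIdeal s w ↔ memPointIdeal f s w := by
  change _ ∈ restrictSupport F _ ↔ _
  rw [mem_restrictSupport_iff]
  refine ⟨fun h u hu => ?_, fun h u hu => ?_⟩
  · by_contra hne
    obtain ⟨i, hi⟩ := h (mem_support_iff.mpr hne)
    exact (hu i).not_ge hi
  · by_contra! hlt
    exact mem_support_iff.mp hu (h u (by simpa using hlt))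

variable (S : Fin n → Finset F) (m : Fin n → F → ℕ)

theorem gPoly_mem_pointIdeal {s : Fin n → F} {j : Fin n} (hs : s j ∈ S j) :
    gPoly S m j ∈ pointIdeal s fun i => m i (s i) := by
  rw [pointIdeal, Ideal.mem_comap, gPoly, map_prod]
  refine Ideal.mem_of_dvd _ (Finset.dvd_prod_of_mem _ hs) ?_
  change _ ∈ restrictSupport F _
  simpa [X_pow_eq_monomial] using ⟨j, by simp⟩

noncomputable def gPolyUnivariate (j : Fin n) : F[X] :=
  ∏ s ∈ S j, (Polynomial.X - Polynomial.C s) ^ m j s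

theorem monic_gPolyUnivariate (j : Fin n) : (gPolyUnivariate S m j).Monic :=
  Polynomial.monic_prod_of_monic _ _ fun s _ => (Polynomial.monic_X_sub_C s).pow _

theorem natDegree_gPolyUnivariate (j : Fin n) :
    (gPolyUnivariate S m j).natDegree = dSize S m j := by
  rw [gPolyUnivariate, Polynomial.natDegree_prod_of_monic _ _ fun s _ =>
    (Polynomial.monic_X_sub_C s).pow _]
  simp [dSize]

theorem aeval_X_gPolyUnivariate (j : Fin n) :
    Polynomial.aeval (X j) (gPolyUnivariate S m j) = gPoly S m j := by
  simp [gPolyUnivariate, gPoly]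

end Grid

theorem taylorCoeff_succ {F : Type*} [Field F] {n : ℕ} (f : MvPolynomial (Fin (n + 1)) F)
    (s : Fin (n + 1) → F) (u : Fin (n + 1) →₀ ℕ) :
    taylorCoeff f s u =
      taylorCoeff ((Polynomial.taylor (C (s 0)) (finSuccEquiv F n f)).coeff (u 0)) (Fin.tail s)
        (Finsupp.tail u) := by
  rw [taylorCoeff, taylorCoeff, ← Finsupp.cons_tail u,
    ← finSuccEquiv_coeff_coeff (Finsupp.tail u) _ (u 0), finSuccEquiv_aeval_X_add_C,
    Polynomial.coeff_map]
  simp [Finsupp.cons_tail, Fin.tail]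

theorem eq_zero_of_memPointIdeal_of_mem_restrictSupport {F : Type*} [Field F] {n : ℕ}
    (S : Fin n → Finset F) (m : Fin n → F → ℕ) {f : MvPolynomial (Fin n) F}
    (hI : ∀ s : Fin n → F, (∀ i, s i ∈ S i) → memPointIdeal f s fun i => m i (s i))
    (hf : f ∈ restrictSupport F {v | ∀ i, v i < dSize S m i}) : f = 0 := by
  induction n with
  | zero =>
    have h0 := hI finZeroElim finZeroElim 0 finZeroElim
    rw [taylorCoeff, eq_C_of_isEmpty f, aeval_C, algebraMap_eq, coeff_zero_C] at h0
    rw [eq_C_of_isEmpty f, h0, map_zero]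
  | succ n ih =>
    apply (finSuccEquiv F n).injective
    rw [map_zero]
    refine Polynomial.eq_zero_of_coeff_taylor_eq_zero_of_degree_lt (T := S 0) (a := C)
      (μ := m 0) (fun s _ t _ hst => ?_) (fun t ht j hj => ?_) ?_
    · rw [← C_sub]
      exact (sub_ne_zero_of_ne hst).isUnit.map C
    · refine ih (fun i => S i.succ) (fun i => m i.succ) (fun s hs u hu => ?_)
        (Polynomial.coeff_taylor_mem_of_forall_coeff_mem
          (coeff_finSuccEquiv_mem_restrictSupport hf) t j)
      have h := hI (Fin.cons t s) (Fin.cases ht hs) (Finsupp.cons j u) (Fin.cases hj hu)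
      simpa [taylorCoeff_succ] using h
    · rw [Polynomial.degree_lt_iff_coeff_zero]
      intro k hk
      ext v
      rw [finSuccEquiv_coeff_coeff, coeff_zero]
      exact notMem_support_iff.mp fun hv => (hf hv 0).not_ge (by simpa [dSize] using hk)

theorem stmt_4_general {F : Type*} [Field F] {n : ℕ}
    (S : Fin n → Finset F)
    (m : Fin n → F → ℕ)
    (le : (Fin n →₀ ℕ) → (Fin n →₀ ℕ) → Prop)
    (hantisymm : ∀ a b, le a b → le b a → a = b)
    (hadd : ∀ a b c, le a b → le (a + c) (b + c))
    (hzero : ∀ a, le 0 a)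
    (f : MvPolynomial (Fin n) F)
    (hfI : ∀ s : Fin n → F, (∀ i, s i ∈ S i) →
      memPointIdeal f s fun i => m i (s i))
    (L : Fin n →₀ ℕ) (hL : L ∈ f.support) (hLmax : ∀ u ∈ f.support, le u L) :
    ∃ i, dSize S m i ≤ L i := by
  by_contra! hL_reduced
  obtain ⟨r, hfr, hr, hrL⟩ := exists_sub_reduced_mem_span (monic_gPolyUnivariate S m) f
  simp only [natDegree_gPolyUnivariate, aeval_X_gPolyUnivariate] at hfr hr hrL
  have hrI : ∀ s, (∀ i, s i ∈ S i) → memPointIdeal r s fun i => m i (s i) := fun s hs => by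
    have hspan : Ideal.span (Set.range (gPoly S m)) ≤ pointIdeal s fun i => m i (s i) :=
      Ideal.span_le.mpr (Set.range_subset_iff.mpr fun j => gPoly_mem_pointIdeal S m (hs j))
    rw [← mem_pointIdeal, ← sub_sub_cancel f r]
    exact sub_mem (mem_pointIdeal.mpr (hfI s hs)) (hspan hfr)
  have hr0 : r = 0 := eq_zero_of_memPointIdeal_of_mem_restrictSupport S m hrI hr
  have hLr : coeff L r = coeff L f :=
    hrL L hL_reduced fun u hu hLu => hantisymm _ _ (hLmax u hu) (rel_of_le hadd hzero hLu)
  exact mem_support_iff.mp hL (by rw [← hLr, hr0, coeff_zero])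

/-- `{g_1, …, g_n}` is a universal Gröbner basis of `I`: for every monomial order
(a linear order on exponent vectors, compatible with addition, with `0` least) and every
nonzero `f ∈ I`, the leading monomial of `f` has `i`-th exponent at least `d_i`
for some `i`, i.e. it is divisible by `x_i^{d_i}`. -/
theorem stmt_4 {F : Type*} [Field F] {n : ℕ} (hn : 1 ≤ n)
    (S : Fin n → Finset F) (hS : ∀ i, (S i).Nonempty)
    (m : Fin n → F → ℕ) (hm : ∀ i, ∀ s ∈ S i, 1 ≤ m i s)
    (le : (Fin n →₀ ℕ) → (Fin n →₀ ℕ) → Prop)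
    (hrefl : ∀ a, le a a)
    (hantisymm : ∀ a b, le a b → le b a → a = b)
    (htrans : ∀ a b c, le a b → le b c → le a c)
    (htotal : ∀ a b, le a b ∨ le b a)
    (hadd : ∀ a b c, le a b → le (a + c) (b + c))
    (hzero : ∀ a, le 0 a)
    (f : MvPolynomial (Fin n) F) (hf0 : f ≠ 0)
    (hfI : ∀ s : Fin n → F, (∀ i, s i ∈ S i) →
      memPointIdeal f s fun i => m i (s i))
    (L : Fin n →₀ ℕ) (hL : L ∈ f.support) (hLmax : ∀ u ∈ f.support, le u L) :
    ∃ i, dSize S m i ≤ L i :=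
  stmt_4_general S m le hantisymm hadd hzero f hfI L hL hLmax
end

section
/- Let f ∈ F[x_1,...,x_n] be a polynomial of total degree t_1 + ⋯ + t_n, where each t_i is a nonnegative integer, and assume the coefficient of the monomial x_1^{t_1} x_2^{t_2} ⋯ x_n^{t_n} in f is nonzero. Suppose (S_1,m_1), ..., (S_n,m_n) are multisets in F with d_i > t_i for each i. Then f ∉ I; in other words, there exist a point s = (s_1,...,s_n) ∈ S_1 × ⋯ × S_n and an exponent vector u = (u_1,...,u_n) with u_i < m_i(s_i) for each i such that f_u(s) ≠ 0. -/
/-!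
Divide `f` by the univariate polynomials `g_i = ∏_{s ∈ S_i} (x_i - s)^{m_i(s)}` with respect to the
degree-lexicographic order: `f = Σ h_i g_i + r` with `deg (h_i g_i) ≤ deg f` and `deg_{x_i} r < d_i`.
Each `h_i g_i` lies in `I`, so if `f ∈ I` then `r ∈ I`, and a polynomial in `I` whose degree in
each `x_i` is below `d_i` is zero: by induction on `n`, this reduces to the fact that a nonzero
univariate polynomial vanishing to order `m(a)` at every `a ∈ S` has at least `Σ m(a)` roots.
Then `f = Σ h_i g_i`, but `x^t` does not occur in `h_i g_i`: as `g_i` involves only `x_i`, such a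
term would be `x^a · x_i^e` with `x^a` in `h_i` and `e ≤ t_i < d_i`, so
`deg x^a > Σ t_j - d_i ≥ deg h_i`.
-/

open MvPolynomial

namespace Polynomial

theorem eq_zero_of_natDegree_lt_of_coeff_taylor_eq_zero {R : Type*} [CommRing R] [IsDomain R]
    {p : R[X]} (S : Finset R) (m : R → ℕ) (hdeg : p.natDegree < ∑ a ∈ S, m a)
    (hvan : ∀ a ∈ S, ∀ k < m a, (p.taylor a).coeff k = 0) : p = 0 := by
  classical
  by_contra hp
  have hmult : ∀ a ∈ S, m a ≤ p.roots.count a := fun a ha => by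
    rw [count_roots, rootMultiplicity_eq_natTrailingDegree, ← taylor_apply]
    exact le_natTrailingDegree (by rwa [Ne, taylor_eq_zero]) (hvan a ha)
  have := calc ∑ a ∈ S, m a
      ≤ ∑ a ∈ S ∪ p.roots.toFinset, p.roots.count a :=
        (Finset.sum_le_sum hmult).trans (Finset.sum_le_sum_of_subset Finset.subset_union_left)
    _ = Multiset.card p.roots := Multiset.sum_count_eq_card fun a ha => by simp [ha]
    _ ≤ p.natDegree := card_roots' p
  omega

end Polynomial

namespace MvPolynomial

variable {σ R : Type*} [CommSemiring R]

lemma degreeOf_coeff_taylor_C_le {p : Polynomial (MvPolynomial σ R)}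
    {j : σ} {D : ℕ} (hp : ∀ k, degreeOf j (p.coeff k) ≤ D) (c : R) (k : ℕ) :
    degreeOf j ((p.taylor (C c)).coeff k) ≤ D := by
  have hsum : (p.taylor (C c)).coeff k =
      ∑ i ∈ p.support, p.coeff i * C (c ^ (i - k) * (i.choose k : R)) := by
    conv_lhs => rw [p.as_sum_support]
    simp only [map_sum, Polynomial.taylor_monomial, Polynomial.finsetSum_coeff,
      Polynomial.coeff_C_mul, Polynomial.coeff_X_add_C_pow, map_mul, map_pow, map_natCast]
  rw [hsum]
  refine (degreeOf_sum_le _ _ _).trans (Finset.sup_le fun i _ => ?_)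
  exact (degreeOf_mul_C_le _ _ _).trans (hp i)

lemma coeff_X_pow_mul_eq_zero {i : σ} {k : ℕ} {u : σ →₀ ℕ}
    (hu : u i < k) (q : MvPolynomial σ R) : coeff u (X i ^ k * q) = 0 := by
  rw [X_pow_eq_monomial, coeff_monomial_mul', if_neg (by simpa [Finsupp.single_le_iff] using hu)]

noncomputable def taylor (s : σ → R) : MvPolynomial σ R →ₐ[R] MvPolynomial σ R :=
  aeval fun i => X i + C (s i)

lemma taylor_X (s : σ → R) (i : σ) : taylor s (X i) = X i + C (s i) := aeval_X _ _

lemma taylor_C (s : σ → R) (a : R) : taylor s (C a) = C a := aeval_C _ _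

lemma finSuccEquiv_taylor {n : ℕ} (s : Fin (n + 1) → R) (r : MvPolynomial (Fin (n + 1)) R) :
    finSuccEquiv R n (taylor s r) =
      ((finSuccEquiv R n r).taylor (C (s 0))).map (taylor (Fin.tail s)) := by
  have finSuccEquiv_C (a : R) : finSuccEquiv R n (C a) = Polynomial.C (C a) := by
    simp [finSuccEquiv_apply]
  induction r using MvPolynomial.induction_on with
  | C a =>
    rw [taylor_C, finSuccEquiv_C, Polynomial.taylor_C, Polynomial.map_C]
    exact congrArg _ (taylor_C _ _).symm
  | add p q hp hq => rw [map_add, map_add, hp, hq, map_add, map_add, Polynomial.map_add]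
  | mul_X p i hp =>
    rw [map_mul, map_mul, hp, map_mul, Polynomial.taylor_mul, Polynomial.map_mul]
    refine congrArg₂ (· * ·) rfl ?_
    cases i using Fin.cases with
    | zero =>
      rw [taylor_X, map_add, finSuccEquiv_X_zero, finSuccEquiv_C, Polynomial.taylor_X]
      simp
    | succ j =>
      rw [taylor_X, map_add, finSuccEquiv_X_succ, finSuccEquiv_C, Polynomial.taylor_C]
      simp [taylor_X, Fin.tail]

end MvPolynomial

section

variable {F : Type*} [Field F]

lemma taylorCoeff_eq_coeff_taylor {n : ℕ} (f : MvPolynomial (Fin n) F) (s : Fin n → F)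
    (u : Fin n →₀ ℕ) : taylorCoeff f s u = coeff u (taylor s f) := rfl

lemma taylorCoeff_cons {n : ℕ} (r : MvPolynomial (Fin (n + 1)) F) (s₀ : F) (s : Fin n → F)
    (u₀ : ℕ) (u : Fin n →₀ ℕ) :
    taylorCoeff r (Fin.cons s₀ s) (u.cons u₀) =
      taylorCoeff (((finSuccEquiv F n r).taylor (C s₀)).coeff u₀) s u := by
  rw [taylorCoeff_eq_coeff_taylor, taylorCoeff_eq_coeff_taylor, ← finSuccEquiv_coeff_coeff,
    finSuccEquiv_taylor, Polynomial.coeff_map, Fin.cons_zero, Fin.tail_cons]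
  rfl

theorem eq_zero_of_forall_memPointIdeal {n : ℕ} (S : Fin n → Finset F) (m : Fin n → F → ℕ)
    (r : MvPolynomial (Fin n) F) (hdeg : ∀ i, degreeOf i r < dSize S m i)
    (hvan : ∀ s : Fin n → F, (∀ i, s i ∈ S i) → memPointIdeal r s fun i => m i (s i)) :
    r = 0 := by
  classical
  induction n with
  | zero =>
    have htaylor : taylor (Fin.elim0 : Fin 0 → F) = AlgHom.id F _ :=
      algHom_ext fun i => i.elim0
    ext u
    have h := hvan Fin.elim0 (fun i => i.elim0) u (fun i => i.elim0)
    rwa [taylorCoeff_eq_coeff_taylor, htaylor] at h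
  | succ n ih =>
    set p := finSuccEquiv F n r
    have hcoeff : ∀ s₀ ∈ S 0, ∀ k < m 0 s₀, (p.taylor (C s₀)).coeff k = 0 := by
      intro s₀ hs₀ k hk
      refine ih (fun i => S i.succ) (fun i => m i.succ) _ (fun j => ?_) fun s hs u hu => ?_
      · exact (degreeOf_coeff_taylor_C_le (fun k => degreeOf_coeff_finSuccEquiv r j k) s₀ k).trans_lt
          (hdeg j.succ)
      · rw [← taylorCoeff_cons]
        refine hvan _ (Fin.cases hs₀ hs) _ (Fin.cases ?_ ?_)
        · simpa using hk
        · simpa using hu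
    suffices p = 0 from (finSuccEquiv F n).map_eq_zero_iff.1 this
    refine Polynomial.eq_zero_of_natDegree_lt_of_coeff_taylor_eq_zero ((S 0).image C)
      (fun a => m 0 (coeff 0 a)) ?_ ?_
    · rw [Finset.sum_image fun a _ b _ h => C_injective _ _ h, natDegree_finSuccEquiv]
      simp only [coeff_zero_C]
      exact hdeg 0
    · simp only [Finset.mem_image]
      rintro _ ⟨s₀, hs₀, rfl⟩ k hk
      exact hcoeff s₀ hs₀ k (by simpa using hk)

end

section

open MonomialOrder

variable {F : Type*} [Field F] {n : ℕ} (S : Fin n → Finset F) (m : Fin n → F → ℕ)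

lemma memPointIdeal_mul_gPoly (q : MvPolynomial (Fin n) F) {i : Fin n} {s : Fin n → F}
    (hs : s i ∈ S i) : memPointIdeal (gPoly S m i * q) s fun j => m j (s j) := by
  intro u hu
  have hdvd : X i ^ m i (s i) ∣ taylor s (gPoly S m i) := by
    rw [gPoly, map_prod]
    refine dvd_trans ?_ (Finset.dvd_prod_of_mem _ hs)
    simp [taylor_X]
  obtain ⟨w, hw⟩ := hdvd
  rw [taylorCoeff_eq_coeff_taylor, map_mul, hw, mul_assoc]
  exact coeff_X_pow_mul_eq_zero (hu i) _

lemma degLex_degree_gPoly (i : Fin n) :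
    degLex.degree (gPoly S m i) = Finsupp.single i (dSize S m i) := by
  rw [gPoly, degree_prod fun c _ => pow_ne_zero _ (degLex.monic_X_sub_C i c).ne_zero]
  simp [degree_pow, degree_X_sub_C, dSize, Finsupp.single_finsetSum]

lemma degLex_monic_gPoly (i : Fin n) : degLex.Monic (gPoly S m i) :=
  MonomialOrder.Monic.prod fun c _ => (degLex.monic_X_sub_C i c).pow

lemma gPoly_mem_supported (i : Fin n) : gPoly S m i ∈ supported F ({i} : Set (Fin n)) := by
  refine Subalgebra.prod_mem _ fun c _ => Subalgebra.pow_mem _ (Subalgebra.sub_mem _ ?_ ?_) _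
  · exact X_mem_supported.2 rfl
  · exact Subalgebra.algebraMap_mem _ c

lemma coeff_gPoly_mul_eq_zero {i : Fin n} (q : MvPolynomial (Fin n) F) {t : Fin n →₀ ℕ}
    (hdeg : (gPoly S m i * q).totalDegree ≤ t.degree) (ht : t i < dSize S m i) :
    coeff t (gPoly S m i * q) = 0 := by
  by_cases hq : q = 0
  · simp [hq]
  have htot : (gPoly S m i).totalDegree = dSize S m i := by
    rw [← degree_degLexDegree, degLex_degree_gPoly, Finsupp.degree_single]
  rw [totalDegree_mul_of_isDomain (degLex_monic_gPoly S m i).ne_zero hq, htot] at hdeg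
  rw [coeff_mul]
  refine Finset.sum_eq_zero ?_
  rintro ⟨a, b⟩ hab
  rw [Finset.HasAntidiagonal.mem_antidiagonal] at hab
  by_cases ha : coeff a (gPoly S m i) = 0
  · rw [ha, zero_mul]
  obtain ⟨e, rfl⟩ : ∃ e, a = Finsupp.single i e := by
    refine Finsupp.support_subset_singleton'.1 fun j hj => ?_
    simpa using mem_supported.1 (gPoly_mem_supported S m i)
      ((mem_vars_iff_mem_support j).2 ⟨_, mem_support_iff.2 ha, hj⟩)
  have he : e ≤ t i := by simp [← hab]
  have hb : t.degree = e + b.degree := by rw [← hab, map_add, Finsupp.degree_single]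
  rw [coeff_eq_zero_of_totalDegree_lt (show q.totalDegree < b.degree by omega), mul_zero]

theorem coeff_eq_zero_of_forall_memPointIdeal (t : Fin n →₀ ℕ) (hd : ∀ i, t i < dSize S m i)
    (f : MvPolynomial (Fin n) F) (hdeg : f.totalDegree ≤ t.degree)
    (hvan : ∀ s : Fin n → F, (∀ i, s i ∈ S i) → memPointIdeal f s fun i => m i (s i)) :
    coeff t f = 0 := by
  obtain ⟨h, r, hf, hh, hr⟩ := degLex.div (b := gPoly S m)
    (fun i => by rw [(degLex_monic_gPoly S m i).leadingCoeff_eq_one]; exact isUnit_one) f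
  have hr0 : r = 0 := by
    refine eq_zero_of_forall_memPointIdeal S m r (fun i => ?_) fun s hs u hu => ?_
    · refine (degreeOf_lt_iff (Nat.zero_lt_of_lt (hd i))).2 fun c hc => ?_
      have := hr c hc i
      rw [degLex_degree_gPoly, Finsupp.single_le_iff] at this
      exact not_le.1 this
    · have hsum : taylorCoeff (Finsupp.linearCombination _ (gPoly S m) h) s u = 0 := by
        rw [Finsupp.linearCombination_apply, Finsupp.sum, taylorCoeff_eq_coeff_taylor]
        rw [map_sum, coeff_sum]
        refine Finset.sum_eq_zero fun i _ => ?_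
        rw [smul_eq_mul, mul_comm, ← taylorCoeff_eq_coeff_taylor]
        exact memPointIdeal_mul_gPoly S m _ (hs i) u hu
      have hsub : taylorCoeff r s u =
          taylorCoeff f s u - taylorCoeff (Finsupp.linearCombination _ (gPoly S m) h) s u := by
        simp only [taylorCoeff_eq_coeff_taylor, hf, map_add, coeff_add, add_sub_cancel_left]
      rw [hsub, hvan s hs u hu, hsum, sub_zero]
  rw [hf, hr0, add_zero, Finsupp.linearCombination_apply, Finsupp.sum, coeff_sum]
  refine Finset.sum_eq_zero fun i _ => ?_
  rw [smul_eq_mul, mul_comm]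
  exact coeff_gPoly_mul_eq_zero S m _ ((degLex_totalDegree_monotone (hh i)).trans hdeg) (hd i)

end

theorem stmt_5_general {F : Type*} [Field F] {n : ℕ}
    (S : Fin n → Finset F) (m : Fin n → F → ℕ)
    (t : Fin n → ℕ) (f : MvPolynomial (Fin n) F)
    (hdeg : f.totalDegree = ∑ i, t i)
    (hcoeff : coeff (Finsupp.equivFunOnFinite.symm t) f ≠ 0)
    (hd : ∀ i, t i < dSize S m i) :
    ∃ s : Fin n → F, (∀ i, s i ∈ S i) ∧
      ∃ u : Fin n →₀ ℕ, (∀ i, u i < m i (s i)) ∧ taylorCoeff f s u ≠ 0 := by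
  by_contra! hvan
  refine hcoeff (coeff_eq_zero_of_forall_memPointIdeal S m _ (by simpa using hd) f ?_ hvan)
  simp [hdeg, Finsupp.degree_eq_sum]

/-- The nonvanishing theorem for multisets: if `deg f = Σ t_i`, the coefficient of
`x_1^{t_1} ⋯ x_n^{t_n}` in `f` is nonzero, and `d_i > t_i` for all `i`, then `f ∉ I`:
there are `s ∈ S` and `u < m(s)` with `f_u(s) ≠ 0`. -/
theorem stmt_5 {F : Type*} [Field F] {n : ℕ} (hn : 1 ≤ n)
    (S : Fin n → Finset F) (hS : ∀ i, (S i).Nonempty)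
    (m : Fin n → F → ℕ) (hm : ∀ i, ∀ s ∈ S i, 1 ≤ m i s)
    (t : Fin n → ℕ) (f : MvPolynomial (Fin n) F)
    (hdeg : f.totalDegree = ∑ i, t i)
    (hcoeff : coeff (Finsupp.equivFunOnFinite.symm t) f ≠ 0)
    (hd : ∀ i, t i < dSize S m i) :
    ∃ s : Fin n → F, (∀ i, s i ∈ S i) ∧
      ∃ u : Fin n →₀ ℕ, (∀ i, u i < m i (s i)) ∧ taylorCoeff f s u ≠ 0 :=
  stmt_5_general S m t f hdeg hcoeff hd
end
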